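/- arXiv:2407.15737 — 2 statements merged into one kernel-verified Lean document; each statement's English description precedes it below -/
import Mathlib

section
/- Let β be a partition of J into M (possibly empty) bags such that Opt_min(β, m) ≥ 1 for every m ∈ {1,…,M}. For an offset a ∈ {0,1,…,1/ε+3} let M_a := { m ∈ {1,…,M} : Opt_min(β, m) ∈ ⋃_{k=0}^{K} Ĩ^a_k }. Then there exists an offset a ∈ {0,1,…,1/ε+3} such that ∑_{m∈M_a} q_m · Opt_min(β, m) ≥ (1/(1+4ε)) · ∑_{m=1}^M q_m · Opt_min(β, m). -/
open scoped BigOperators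

attribute [local instance] Classical.propDecidable

/-- The load of machine `i` under the assignment `σ` of items (with sizes `sz`) to `m` machines. -/
noncomputable def load {ι : Type*} [Fintype ι] {m : ℕ} (sz : ι → ℝ) (σ : ι → Fin m)
    (i : Fin m) : ℝ :=
  ∑ b : ι, if σ b = i then sz b else 0

/-- `Opt_min`: the maximum over all assignments of items (with sizes `sz`) to `m` identical
machines of the minimum machine load. -/
noncomputable def optMin {ι : Type*} [Fintype ι] (sz : ι → ℝ) (m : ℕ) : ℝ :=
  ⨆ σ : ι → Fin m, ⨅ i : Fin m, load sz σ i

/-- The size of bag `b` for the partition `β` of the jobs into bags. -/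
noncomputable def bagSize {n : ℕ} {ι : Type*} (p : Fin n → ℝ) (β : Fin n → ι) (b : ι) : ℝ :=
  ∑ j : Fin n, if β j = b then p j else 0

/-!
For `v ≥ 1` write `t = log_x v` with `x = n/ε`. Membership of `v` in `Ĩ^a_k` says
`k(E+3) - E + a ≤ t < k(E+3) + a`, where `E = 1/ε`: the windows `Ĩ^a_k` are translates by the
offset `a` of a grid with period `E + 3` in which each period misses only `3` units. Hence for
every fixed `t` at least `E` of the `E + 4` offsets capture `t`, namely those with
`a ≡ ⌊t⌋ - 3 - j (mod E + 3)` for `j < E`. Averaging over the offsets, some offset keeps at least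
the fraction `E / (E + 4) = 1 / (1 + 4ε)` of the expected value.
-/

open Finset Real

theorem load_le_sum {ι : Type*} [Fintype ι] {m : ℕ} {sz : ι → ℝ} (hsz : ∀ b, 0 ≤ sz b)
    (σ : ι → Fin m) (i : Fin m) : load sz σ i ≤ ∑ b, sz b :=
  sum_le_sum fun b _ => by split_ifs <;> simp [hsz]

theorem optMin_le_sum {ι : Type*} [Fintype ι] {sz : ι → ℝ} (hsz : ∀ b, 0 ≤ sz b) {m : ℕ}
    (hm : 0 < m) : optMin sz m ≤ ∑ b, sz b := by
  have : Nonempty (Fin m) := ⟨⟨0, hm⟩⟩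
  exact ciSup_le fun σ =>
    (ciInf_le (Set.finite_range _).bddBelow ⟨0, hm⟩).trans (load_le_sum hsz σ _)

theorem bagSize_nonneg {n : ℕ} {ι : Type*} {p : Fin n → ℝ} (hp : ∀ j, 0 ≤ p j) (β : Fin n → ι)
    (b : ι) : 0 ≤ bagSize p β b :=
  sum_nonneg fun j _ => by split_ifs <;> simp [hp]

theorem sum_bagSize {n : ℕ} {ι : Type*} [Fintype ι] (p : Fin n → ℝ) (β : Fin n → ι) :
    ∑ b, bagSize p β b = ∑ j, p j := by
  unfold bagSize
  rw [sum_comm]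
  simp

theorem exists_window_of_emod {E K : ℕ} {N j : ℤ} (hN : 0 ≤ N) (hNK : N + E < K * (E + 3))
    (hj0 : 0 ≤ j) (hjE : j < E) :
    ∃ k : ℕ, k ≤ K ∧ k * (E + 3) - E + (N - 3 - j) % (E + 3) ≤ N ∧
      N < k * (E + 3) + (N - 3 - j) % (E + 3) := by
  set m : ℤ := E + 3
  set r := (N - 3 - j) % m
  set q := (N - 3 - j) / m
  have hm : 0 < m := by positivity
  have hdiv : m * q + r = N - 3 - j := Int.mul_ediv_add_emod _ _
  have hr0 : 0 ≤ r := Int.emod_nonneg _ hm.ne'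
  have hrm : r < m := Int.emod_lt_of_pos _ hm
  have hq : -1 ≤ q := by
    by_contra! h
    nlinarith
  have hlo : (q + 1) * m - E + r ≤ N := by linarith
  have hK : q + 1 < K := by nlinarith
  -- `N - r = (q + 1)(E + 3) - E + j` with `0 ≤ j < E`, so the window of index `q + 1` works.
  refine ⟨(q + 1).toNat, by omega, ?_⟩
  rw [Int.toNat_of_nonneg (by omega)]
  constructor <;> linarith

theorem le_card_offsets_window {E K : ℕ} {t : ℝ} (ht : 0 ≤ t) (htK : t + E < K * (E + 3)) :
    E ≤ #{a ∈ range (E + 4) | ∃ k ≤ K, (k : ℝ) * (E + 3) - E + ((a : ℕ) : ℝ) ≤ t ∧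
      t < k * (E + 3) + ((a : ℕ) : ℝ)} := by
  set N := ⌊t⌋
  have hN : 0 ≤ N := Int.floor_nonneg.2 ht
  have hNK : N + E < K * (E + 3) := by
    have : (N : ℝ) + E < K * (E + 3) := by linarith [Int.floor_le t]
    exact_mod_cast this
  have hm : (0 : ℤ) < E + 3 := by positivity
  let f : ℕ → ℕ := fun j => ((N - 3 - j) % (E + 3)).toNat
  have hf : ∀ j, (f j : ℤ) = (N - 3 - j) % (E + 3) := fun j =>
    Int.toNat_of_nonneg (Int.emod_nonneg _ hm.ne')
  calc E = #(range E) := (card_range E).symm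
    _ ≤ _ := card_le_card_of_injOn f ?maps ?inj
  case maps =>
    intro j hj
    simp only [coe_range, Set.mem_Iio, coe_filter, mem_range, Set.mem_ofPred_eq] at hj ⊢
    obtain ⟨k, hkK, hlo, hhi⟩ := exists_window_of_emod hN hNK (Nat.cast_nonneg j)
      (by exact_mod_cast hj)
    rw [← hf] at hlo hhi
    have hlt := Int.emod_lt_of_pos (N - 3 - j) hm
    rw [← hf] at hlt
    have hlo' : ((k * (E + 3) - E + f j : ℤ) : ℝ) ≤ N := by exact_mod_cast hlo
    have hhi' : ((N + 1 : ℤ) : ℝ) ≤ (k * (E + 3) + f j : ℤ) := by exact_mod_cast hhi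
    push_cast at hlo' hhi'
    refine ⟨by omega, k, hkK, ?_, ?_⟩ <;> linarith [Int.floor_le t, Int.lt_floor_add_one t]
  case inj =>
    intro j hj j' hj' h
    simp only [coe_range, Set.mem_Iio] at hj hj'
    have hmod : (N - 3 - j) % (E + 3) = (N - 3 - j') % (E + 3) := by
      rw [← hf, ← hf, h]
    have := Int.eq_zero_of_abs_lt_dvd (Int.ModEq.dvd hmod) (abs_lt.2 ⟨by omega, by omega⟩)
    omega

theorem le_card_offsets_mem_Ico {x ε v : ℝ} {E K : ℕ} (hx : 1 < x) (hE : E * ε = 1)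
    (hv : 1 ≤ v) (hvK : v < x ^ (3 * (K : ℝ) + ((K : ℝ) - 1) / ε)) :
    E ≤ #{a ∈ range (E + 4) | ∃ k ≤ K, v ∈ Set.Ico
      (x ^ (3 * (k : ℝ) + ((k : ℝ) - 1) / ε + ((a : ℕ) : ℝ)))
      (x ^ (3 * (k : ℝ) + (k : ℝ) / ε + ((a : ℕ) : ℝ)))} := by
  have hdiv : ∀ y : ℝ, y / ε = y * E := fun y => by
    rw [div_eq_mul_inv, ← eq_inv_of_mul_eq_one_left hE]
  have hv0 : 0 < v := by linarith
  have htK : logb x v + E < K * (E + 3) := by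
    have := (logb_lt_iff_lt_rpow hx hv0).2 hvK
    rw [hdiv] at this
    linarith
  refine (le_card_offsets_window (logb_nonneg hx hv) htK).trans (card_le_card fun a => ?_)
  simp only [mem_filter]
  rintro ⟨ha, k, hk, hlo, hhi⟩
  refine ⟨ha, k, hk, (le_logb_iff_rpow_le hx hv0).1 ?_, (logb_lt_iff_lt_rpow hx hv0).1 ?_⟩ <;>
    rw [hdiv] <;> linarith

theorem exists_mul_sum_le_sum_ite {ι : Type*} [Fintype ι] {g : ι → ℝ} (hg : ∀ i, 0 ≤ g i)
    {P : ℕ → ι → Prop} [∀ a i, Decidable (P a i)] {A c : ℕ} (hA : 0 < A)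
    (hc : ∀ i, c ≤ #{a ∈ range A | P a i}) :
    ∃ a < A, (c / A : ℝ) * ∑ i, g i ≤ ∑ i, if P a i then g i else 0 := by
  have hsum : ∑ _a ∈ range A, (c / A : ℝ) * ∑ i, g i ≤
      ∑ a ∈ range A, ∑ i, if P a i then g i else 0 := by
    rw [sum_const, card_range, nsmul_eq_mul, sum_comm, ← mul_assoc,
      mul_div_cancel₀ _ (by positivity), mul_sum]
    gcongr with i
    rw [← sum_filter, sum_const, nsmul_eq_mul]
    exact mul_le_mul_of_nonneg_right (by exact_mod_cast hc i) (hg i)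
  obtain ⟨a, ha, h⟩ := exists_le_of_sum_le (nonempty_range_iff.2 hA.ne') hsum
  exact ⟨a, mem_range.1 ha, h⟩

/-- Scenario `i : Fin M` stands for `m = i + 1` machines, and `E = 1/ε`. -/
theorem stmt5_general (n M : ℕ)
    (p : Fin n → ℕ)
    (q : Fin M → ℝ) (hq : ∀ i, 0 ≤ q i)
    (ε : ℝ) (E : ℕ) (hE : (E : ℝ) * ε = 1)
    (hx : 1 < (n : ℝ) / ε)
    (d : ℕ)
    (hd2 : (∑ j : Fin n, (p j : ℝ)) < ((n : ℝ) / ε) ^ d)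
    (K : ℕ)
    (hK2 : (d : ℝ) ≤ 3 * (K : ℝ) + ((K : ℝ) - 1) / ε)
    (β : Fin n → Fin M)
    (hβ : ∀ i : Fin M, 1 ≤ optMin (bagSize (fun j => (p j : ℝ)) β) (i.1 + 1)) :
    ∃ a : ℕ, (a : ℝ) ≤ 1 / ε + 3 ∧
      (1 / (1 + 4 * ε)) *
          (∑ i : Fin M, q i * optMin (bagSize (fun j => (p j : ℝ)) β) (i.1 + 1)) ≤
        ∑ i : Fin M,
          if ∃ k ≤ K, optMin (bagSize (fun j => (p j : ℝ)) β) (i.1 + 1) ∈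
              Set.Ico (((n : ℝ) / ε) ^ (3 * (k : ℝ) + ((k : ℝ) - 1) / ε + (a : ℝ)))
                (((n : ℝ) / ε) ^ (3 * (k : ℝ) + (k : ℝ) / ε + (a : ℝ)))
          then q i * optMin (bagSize (fun j => (p j : ℝ)) β) (i.1 + 1) else 0 := by
  have hεE : 1 / ε = E := by rw [one_div, ← eq_inv_of_mul_eq_one_left hE]
  have hbag := bagSize_nonneg (fun j => Nat.cast_nonneg (p j)) β
  have hv : ∀ i : Fin M, optMin (bagSize (fun j => (p j : ℝ)) β) (i.1 + 1) <
      ((n : ℝ) / ε) ^ (3 * (K : ℝ) + ((K : ℝ) - 1) / ε) := fun i =>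
    calc _ ≤ ∑ b, bagSize (fun j => (p j : ℝ)) β b := optMin_le_sum hbag i.1.succ_pos
      _ = ∑ j, (p j : ℝ) := sum_bagSize _ β
      _ < ((n : ℝ) / ε) ^ (d : ℝ) := by rwa [rpow_natCast]
      _ ≤ _ := rpow_le_rpow_of_exponent_le hx.le hK2
  have hcard := fun i => le_card_offsets_mem_Ico hx hE (hβ i) (hv i)
  obtain ⟨a, haE, ha⟩ := exists_mul_sum_le_sum_ite
    (fun i => mul_nonneg (hq i) (zero_le_one.trans (hβ i))) (by positivity : 0 < E + 4) hcard
  refine ⟨a, ?_, ?_⟩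
  · rw [hεE]
    exact_mod_cast Nat.le_of_lt_succ haE
  · have hE0 : (E : ℝ) ≠ 0 := left_ne_zero_of_mul_eq_one hE
    have hratio : 1 / (1 + 4 * ε) = (E : ℝ) / (E + 4 : ℕ) := by
      rw [← one_div_one_div ε, hεE]
      push_cast
      field_simp
    rwa [hratio]

/-- existence of a good offset `a ∈ {0,…,1/ε+3}` such that the scenarios `m`
with `Opt_min(β,m)` in `⋃_{k=0}^K Ĩ^a_k` contribute at least a `1/(1+4ε)` fraction of the
expected minimum machine load.  Here processing times are positive integers, `1/ε = E ∈ ℕ`,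
`d` is the smallest positive integer with `(n/ε)^d > ∑_j p_j`, `K` is the smallest positive
integer with `3K + (K−1)/ε ≥ d`, and `Ĩ^a_k = [(n/ε)^{3k+(k−1)/ε+a}, (n/ε)^{3k+k/ε+a})`.
Scenario `i : Fin M` corresponds to `m = i+1` machines. -/
theorem stmt5 (n M : ℕ) (hM : 1 ≤ M)
    (p : Fin n → ℕ) (hp : ∀ j, 1 ≤ p j)
    (q : Fin M → ℝ) (hq : ∀ i, 0 ≤ q i) (hq1 : ∑ i, q i = 1)
    (ε : ℝ) (hε : 0 < ε) (E : ℕ) (hE : (E : ℝ) * ε = 1)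
    (hx : 1 < (n : ℝ) / ε)
    (d : ℕ) (hd1 : 1 ≤ d)
    (hd2 : (∑ j : Fin n, (p j : ℝ)) < ((n : ℝ) / ε) ^ d)
    (hdmin : ∀ d' : ℕ, 1 ≤ d' → (∑ j : Fin n, (p j : ℝ)) < ((n : ℝ) / ε) ^ d' → d ≤ d')
    (K : ℕ) (hK1 : 1 ≤ K)
    (hK2 : (d : ℝ) ≤ 3 * (K : ℝ) + ((K : ℝ) - 1) / ε)
    (hKmin : ∀ K' : ℕ, 1 ≤ K' → (d : ℝ) ≤ 3 * (K' : ℝ) + ((K' : ℝ) - 1) / ε → K ≤ K')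
    (β : Fin n → Fin M)
    (hβ : ∀ i : Fin M, 1 ≤ optMin (bagSize (fun j => (p j : ℝ)) β) (i.1 + 1)) :
    ∃ a : ℕ, (a : ℝ) ≤ 1 / ε + 3 ∧
      (1 / (1 + 4 * ε)) *
          (∑ i : Fin M, q i * optMin (bagSize (fun j => (p j : ℝ)) β) (i.1 + 1)) ≤
        ∑ i : Fin M,
          if ∃ k ≤ K, optMin (bagSize (fun j => (p j : ℝ)) β) (i.1 + 1) ∈
              Set.Ico (((n : ℝ) / ε) ^ (3 * (k : ℝ) + ((k : ℝ) - 1) / ε + (a : ℝ)))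
                (((n : ℝ) / ε) ^ (3 * (k : ℝ) + (k : ℝ) / ε + (a : ℝ)))
          then q i * optMin (bagSize (fun j => (p j : ℝ)) β) (i.1 + 1) else 0 :=
  stmt5_general n M p q hq ε E hE hx d hd2 K hK2 β hβ
end

section
/- Let m ≥ 1 be an integer, ε > 0, s ≥ 0 and T ≥ 0. Let g_1,…,g_r ≥ 0 (sizes of large bags) and let b_1,…,b_t ∈ [0,s] (sizes of small bags) with T/(1+ε) ≤ ∑_{j=1}^t b_j ≤ T. For an assignment σ : {1,…,r} → {1,…,m} of the large bags, let L_σ(i) := ∑_{u : σ(u)=i} g_u, and let F(σ) := max{ min_{1≤i≤m} (L_σ(i) + x_i) : x_1,…,x_m ≥ 0, ∑_{i=1}^m x_i = T }; let F* := max_σ F(σ). Let V denote the maximum, over all assignments of all r+t bags to the m machines, of the minimum machine load. Then F*/(1+ε) − s ≤ V ≤ F*. -/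
open scoped BigOperators

attribute [local instance] Classical.propDecidable

/-!
Upper bound: the small bags on each machine, plus the slack `T - ∑ b` on one machine, form an
admissible sand distribution. Lower bound: given a sand distribution `x`, fill the machines one
after another greedily with small bags up to the scaled targets `x i / (1 + ε)`, whose total is at
most `∑ b`; since each bag has size at most `s`, every machine misses its target by at most `s`.
-/

open Finset

section SmallBags

variable {α : Type*} {b : α → ℝ} {s : ℝ}

theorem exists_subset_sum_mem_Icc (hs : 0 ≤ s) (hb : ∀ j, 0 ≤ b j ∧ b j ≤ s) (A : Finset α)
    {y : ℝ} (hy : 0 ≤ y) (hyA : y ≤ ∑ j ∈ A, b j) :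
    ∃ S ⊆ A, ∑ j ∈ S, b j ∈ Set.Icc (y - s) y := by
  induction A using Finset.induction_on generalizing y with
  | empty =>
    refine ⟨∅, subset_refl _, ?_, ?_⟩ <;> simp only [sum_empty] at hyA ⊢ <;> linarith
  | @insert j A hj ih =>
    rw [sum_insert hj] at hyA
    by_cases hjy : b j ≤ y
    · obtain ⟨S, hSA, hS⟩ := ih (y := y - b j) (by linarith) (by linarith)
      refine ⟨insert j S, insert_subset_insert j hSA, ?_⟩
      rw [sum_insert fun hjS => hj (hSA hjS)]
      constructor <;> linarith [hS.1, hS.2]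
    · refine ⟨∅, empty_subset _, ?_, ?_⟩ <;> simp only [sum_empty] <;> linarith [hb j]

theorem exists_assignment_targets_sub_le {κ : Type*} [DecidableEq κ] [Nonempty κ] (hs : 0 ≤ s)
    (hb : ∀ j, 0 ≤ b j ∧ b j ≤ s) {y : κ → ℝ} (hy : ∀ i, 0 ≤ y i) (K : Finset κ) (A : Finset α)
    (hyA : ∑ i ∈ K, y i ≤ ∑ j ∈ A, b j) :
    ∃ τ : α → κ, ∀ i ∈ K, y i - s ≤ ∑ j ∈ A with τ j = i, b j := by
  induction K using Finset.induction_on generalizing A with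
  | empty => exact ⟨fun _ => Classical.arbitrary κ, by simp⟩
  | @insert i K hi ih =>
    rw [sum_insert hi] at hyA
    have hKy : 0 ≤ ∑ k ∈ K, y k := sum_nonneg fun k _ => hy k
    obtain ⟨S, hSA, hS⟩ := exists_subset_sum_mem_Icc hs hb A (hy i) (by linarith)
    obtain ⟨τ, hτ⟩ := ih (A \ S) (by rw [sum_sdiff_eq_sub hSA]; linarith [hS.2])
    refine ⟨fun j => if j ∈ S then i else τ j, fun k hk => ?_⟩
    rcases mem_insert.1 hk with rfl | hkK
    · refine hS.1.trans (sum_le_sum_of_subset_of_nonneg (fun j hj => ?_) fun j _ _ => (hb j).1)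
      simp [hSA hj, hj]
    · refine (hτ k hkK).trans
        (sum_le_sum_of_subset_of_nonneg (fun j hj => ?_) fun j _ _ => (hb j).1)
      obtain ⟨⟨hjA, hjS⟩, rfl⟩ : (j ∈ A ∧ j ∉ S) ∧ τ j = k := by simpa using hj
      simp [hjA, hjS]

end SmallBags

section Loads

variable {ι α : Type*} [Fintype ι] [Fintype α] {m : ℕ}

theorem load_eq_sum_filter (sz : ι → ℝ) (σ : ι → Fin m) (i : Fin m) :
    load sz σ i = ∑ u with σ u = i, sz u :=
  (sum_filter _ _).symm

theorem load_sum_elim (g : ι → ℝ) (b : α → ℝ) (σ : ι → Fin m) (τ : α → Fin m) (i : Fin m) :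
    load (Sum.elim g b) (Sum.elim σ τ) i = load g σ i + load b τ i :=
  Fintype.sum_sum_type _

theorem load_nonneg {sz : ι → ℝ} (hsz : ∀ u, 0 ≤ sz u) (σ : ι → Fin m) (i : Fin m) :
    0 ≤ load sz σ i :=
  sum_nonneg fun u _ => by split_ifs <;> simp [hsz u]

theorem sum_load (sz : ι → ℝ) (σ : ι → Fin m) : ∑ i, load sz σ i = ∑ u, sz u := by
  simp only [load]
  rw [sum_comm]
  simp

theorem iInf_load_le_optMin (sz : ι → ℝ) (σ : ι → Fin m) : ⨅ i, load sz σ i ≤ optMin sz m :=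
  le_ciSup (Set.finite_range fun σ => ⨅ i, load sz σ i).bddAbove σ

theorem exists_assignment_sub_le_load [NeZero m] {b : α → ℝ} {s : ℝ} (hs : 0 ≤ s)
    (hb : ∀ j, 0 ≤ b j ∧ b j ≤ s) {y : Fin m → ℝ} (hy : ∀ i, 0 ≤ y i)
    (hyb : ∑ i, y i ≤ ∑ j, b j) : ∃ τ : α → Fin m, ∀ i, y i - s ≤ load b τ i := by
  obtain ⟨τ, hτ⟩ := exists_assignment_targets_sub_le hs hb hy univ univ hyb
  exact ⟨τ, fun i => (load_eq_sum_filter b τ i).symm ▸ hτ i (mem_univ i)⟩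

end Loads

section Sand

variable {κ : Type*} [Fintype κ]

/-- `sSup (sandValues (load g σ) T)` is the sand value `F(σ)`. -/
def sandValues (L : κ → ℝ) (T : ℝ) : Set ℝ :=
  {v | ∃ x : κ → ℝ, (∀ i, 0 ≤ x i) ∧ ∑ i, x i = T ∧ v = ⨅ i, (L i + x i)}

variable [Nonempty κ] {L : κ → ℝ} {T : ℝ}

theorem sandValues_nonempty (hT : 0 ≤ T) : (sandValues L T).Nonempty := by
  obtain ⟨i₀⟩ := ‹Nonempty κ›
  refine ⟨_, Pi.single i₀ T, fun i => ?_, by simp, rfl⟩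
  by_cases h : i = i₀ <;> simp [h, hT]

theorem sandValues_bddAbove : BddAbove (sandValues L T) := by
  obtain ⟨i₀⟩ := ‹Nonempty κ›
  refine ⟨L i₀ + T, ?_⟩
  rintro v ⟨x, hx, rfl, rfl⟩
  calc ⨅ i, (L i + x i) ≤ L i₀ + x i₀ := ciInf_le (Set.finite_range _).bddBelow i₀
    _ ≤ L i₀ + ∑ i, x i := by gcongr; exact single_le_sum (fun i _ => hx i) (mem_univ i₀)

end Sand

section Bounds

variable {ι α : Type*} [Fintype ι] [Fintype α] {m : ℕ} [NeZero m]
  {g : ι → ℝ} {b : α → ℝ} {T : ℝ}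

theorem optMin_le_iSup_sSup_sandValues (hb : ∀ j, 0 ≤ b j) (hbT : ∑ j, b j ≤ T) :
    optMin (Sum.elim g b) m ≤ ⨆ σ : ι → Fin m, sSup (sandValues (load g σ) T) := by
  refine ciSup_le fun ρ => ?_
  let σ : ι → Fin m := ρ ∘ Sum.inl
  let τ : α → Fin m := ρ ∘ Sum.inr
  have hρ : ρ = Sum.elim σ τ := (Sum.elim_comp_inl_inr ρ).symm
  let slack : Fin m → ℝ := Pi.single 0 (T - ∑ j, b j)
  have hslack : 0 ≤ slack := Pi.single_nonneg.2 (sub_nonneg.2 hbT)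
  let x : Fin m → ℝ := load b τ + slack
  have hx : ∀ i, 0 ≤ x i := fun i => add_nonneg (load_nonneg hb τ i) (hslack i)
  have hxT : ∑ i, x i = T := by simp [x, slack, sum_add_distrib, sum_load]
  calc ⨅ i, load (Sum.elim g b) ρ i ≤ ⨅ i, (load g σ i + x i) := by
        refine ciInf_mono (Set.finite_range _).bddBelow fun i => ?_
        rw [hρ, load_sum_elim]
        exact add_le_add_right (le_add_of_nonneg_right (hslack i)) _
    _ ≤ sSup (sandValues (load g σ) T) := le_csSup sandValues_bddAbove ⟨x, hx, hxT, rfl⟩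
    _ ≤ ⨆ σ : ι → Fin m, sSup (sandValues (load g σ) T) :=
        le_ciSup (Set.finite_range fun σ => sSup (sandValues (load g σ) T)).bddAbove σ

theorem div_sub_le_optMin_of_mem_sandValues {ε s : ℝ} (hε : 0 ≤ ε) (hs : 0 ≤ s)
    (hg : ∀ u, 0 ≤ g u) (hb : ∀ j, 0 ≤ b j ∧ b j ≤ s) (hbT : T / (1 + ε) ≤ ∑ j, b j)
    (σ : ι → Fin m) {v : ℝ} (hv : v ∈ sandValues (load g σ) T) :
    v / (1 + ε) - s ≤ optMin (Sum.elim g b) m := by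
  obtain ⟨x, hx, rfl, rfl⟩ := hv
  have hε' : 0 < 1 + ε := by linarith
  obtain ⟨τ, hτ⟩ := exists_assignment_sub_le_load hs hb (y := fun i => x i / (1 + ε))
    (fun i => div_nonneg (hx i) hε'.le) (by rw [← sum_div]; exact hbT)
  refine le_trans (le_ciInf fun i => ?_) (iInf_load_le_optMin _ (Sum.elim σ τ))
  rw [load_sum_elim]
  calc (⨅ i, (load g σ i + x i)) / (1 + ε) - s ≤ (load g σ i + x i) / (1 + ε) - s := by
        gcongr; exact ciInf_le (Set.finite_range _).bddBelow i
    _ ≤ load g σ i + (x i / (1 + ε) - s) := by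
        rw [add_div]
        linarith [div_le_self (load_nonneg hg σ i) (by linarith : (1 : ℝ) ≤ 1 + ε)]
    _ ≤ load g σ i + load b τ i := by gcongr; exact hτ i

theorem iSup_sSup_sandValues_div_sub_le_optMin {ε s : ℝ} (hε : 0 ≤ ε) (hs : 0 ≤ s) (hT : 0 ≤ T)
    (hg : ∀ u, 0 ≤ g u) (hb : ∀ j, 0 ≤ b j ∧ b j ≤ s) (hbT : T / (1 + ε) ≤ ∑ j, b j) :
    (⨆ σ : ι → Fin m, sSup (sandValues (load g σ) T)) / (1 + ε) - s ≤
      optMin (Sum.elim g b) m := by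
  have hε' : 0 < 1 + ε := by linarith
  rw [sub_le_iff_le_add, div_le_iff₀ hε']
  refine ciSup_le fun σ => csSup_le (sandValues_nonempty hT) fun v hv => ?_
  have hv' := div_sub_le_optMin_of_mem_sandValues hε hs hg hb hbT σ hv
  rwa [sub_le_iff_le_add, div_le_iff₀ hε'] at hv'

end Bounds

theorem stmt10_general (m : ℕ) (hm : 0 < m) (ε s T : ℝ) (hε : 0 < ε) (hs : 0 ≤ s)
    (r t : ℕ) (g : Fin r → ℝ) (hg : ∀ u, 0 ≤ g u)
    (b : Fin t → ℝ) (hb : ∀ j, 0 ≤ b j ∧ b j ≤ s)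
    (hbT : T / (1 + ε) ≤ ∑ j, b j) (hbT2 : (∑ j, b j) ≤ T) :
    (⨆ σ : Fin r → Fin m, sSup {v : ℝ | ∃ x : Fin m → ℝ, (∀ i, 0 ≤ x i) ∧ (∑ i, x i) = T ∧
        v = ⨅ i : Fin m, ((∑ u : Fin r, if σ u = i then g u else 0) + x i)}) / (1 + ε) - s ≤
      optMin (Sum.elim g b) m ∧
    optMin (Sum.elim g b) m ≤
      ⨆ σ : Fin r → Fin m, sSup {v : ℝ | ∃ x : Fin m → ℝ, (∀ i, 0 ≤ x i) ∧ (∑ i, x i) = T ∧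
        v = ⨅ i : Fin m, ((∑ u : Fin r, if σ u = i then g u else 0) + x i)} := by
  have : NeZero m := ⟨hm.ne'⟩
  have hT : 0 ≤ T := (sum_nonneg fun j _ => (hb j).1).trans hbT2
  exact ⟨iSup_sSup_sandValues_div_sub_le_optMin hε.le hs hT hg hb hbT,
    optMin_le_iSup_sSup_sandValues (fun j => (hb j).1) hbT2⟩

/-- replacing small bags `b_1,…,b_t ∈ [0,s]` of total volume in `[T/(1+ε), T]`
by a fractional sand volume `T` changes the optimal minimum machine load by at most a factor
`1+ε` and an additive `s`: with
`F(σ) = max { min_i (L_σ(i) + x_i) : x ≥ 0, ∑ x_i = T }`, `F* = max_σ F(σ)`, and `V` the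
optimal minimum machine load over all assignments of all `r+t` bags, one has
`F*/(1+ε) − s ≤ V ≤ F*`. -/
theorem stmt10 (m : ℕ) (hm : 0 < m) (ε s T : ℝ) (hε : 0 < ε) (hs : 0 ≤ s) (hT : 0 ≤ T)
    (r t : ℕ) (g : Fin r → ℝ) (hg : ∀ u, 0 ≤ g u)
    (b : Fin t → ℝ) (hb : ∀ j, 0 ≤ b j ∧ b j ≤ s)
    (hbT : T / (1 + ε) ≤ ∑ j, b j) (hbT2 : (∑ j, b j) ≤ T) :
    (⨆ σ : Fin r → Fin m, sSup {v : ℝ | ∃ x : Fin m → ℝ, (∀ i, 0 ≤ x i) ∧ (∑ i, x i) = T ∧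
        v = ⨅ i : Fin m, ((∑ u : Fin r, if σ u = i then g u else 0) + x i)}) / (1 + ε) - s ≤
      optMin (Sum.elim g b) m ∧
    optMin (Sum.elim g b) m ≤
      ⨆ σ : Fin r → Fin m, sSup {v : ℝ | ∃ x : Fin m → ℝ, (∀ i, 0 ≤ x i) ∧ (∑ i, x i) = T ∧
        v = ⨅ i : Fin m, ((∑ u : Fin r, if σ u = i then g u else 0) + x i)} :=
  stmt10_general m hm ε s T hε hs r t g hg b hb hbT hbT2
end
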